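/- Let k ≥ 2 be even, let T be a finite tree and let P be a set of unordered pairs of vertices of T such that (T, P) is (k−2)-distance-separating. Let G be the graph obtained from T by adding, for each pair {x,y} ∈ P, k+1 new paths of length k from x to y whose internal vertices are new and pairwise distinct (so the added paths are vertex-disjoint except at the endpoints x and y). Then G is not layered: for all n and all j, G is not isomorphic to a subgraph of the j-th layer of Q_n. -/

import Mathlib

open SimpleGraph

/-- The number of ones (`true` coordinates) of a vertex of the hypercube. -/
def onesCount {n : ℕ} (x : Fin n → Bool) : ℕ := (Finset.univ.filter fun i => x i = true).card

/-- The `n`-dimensional hypercube graph `Q_n`. -/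
def cube (n : ℕ) : SimpleGraph (Fin n → Bool) where
  Adj x y := hammingDist x y = 1
  symm := by constructor; intro x y h; rwa [hammingDist_comm]
  loopless := by constructor; intro x h; simp [hammingDist_self] at h

/-- The vertex set of the `k`-th layer of `Q_n`. -/
def layerSet (n k : ℕ) : Set (Fin n → Bool) := {x | onesCount x = k ∨ onesCount x = k + 1}

/-- The `k`-th layer of `Q_n`: the subgraph induced on vertices with `k` or `k+1` ones. -/
def layer (n k : ℕ) : SimpleGraph (layerSet n k) := (cube n).induce (layerSet n k)

/-- `f` is an isomorphism from `G` onto a subgraph of `H`. -/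
def IsEmbedding {V W : Type*} (G : SimpleGraph V) (H : SimpleGraph W) (f : V → W) : Prop :=
  Function.Injective f ∧ ∀ u v, G.Adj u v → H.Adj (f u) (f v)

/-- `f` is an isomorphism from `G` onto an induced subgraph of `H`. -/
def IsInducedEmbedding {V W : Type*} (G : SimpleGraph V) (H : SimpleGraph W) (f : V → W) : Prop :=
  Function.Injective f ∧ ∀ u v, G.Adj u v ↔ H.Adj (f u) (f v)

/-- `G` is cubical: isomorphic to a subgraph of some hypercube. -/
def IsCubical {V : Type*} (G : SimpleGraph V) : Prop :=
  ∃ (n : ℕ) (f : V → (Fin n → Bool)), IsEmbedding G (cube n) f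

/-- `G` is layered: isomorphic to a subgraph of some layer of some hypercube. -/
def IsLayered {V : Type*} (G : SimpleGraph V) : Prop :=
  ∃ (n k : ℕ) (f : V → layerSet n k), IsEmbedding G (layer n k) f

/-- A cubical edge-labelling. -/
def IsCubicalLabelling {V : Type*} (G : SimpleGraph V) (χ : Sym2 V → ℕ) : Prop :=
  (∀ (u : V) (w : G.Walk u u), w.IsCycle → ∀ c : ℕ, Even ((w.edges.map χ).count c)) ∧
  (∀ (u v : V) (w : G.Walk u v), w.IsPath → 0 < w.length →
      ∃ c : ℕ, Odd ((w.edges.map χ).count c))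

/-- A layered edge-labelling. -/
def IsLayeredLabelling {V : Type*} (G : SimpleGraph V) (χ : Sym2 V → ℕ) : Prop :=
  IsCubicalLabelling G χ ∧
  ∀ e₁ ∈ G.edgeSet, ∀ e₂ ∈ G.edgeSet, χ e₁ = χ e₂ →
    ∀ u v, u ∈ e₁ → v ∈ e₂ →
      ∀ (w : G.Walk u v), w.IsPath → (∀ e ∈ w.edges, χ e ≠ χ e₁) → Even w.length

/-- `(G, P)` is `t`-distance-separating. -/
def DistSeparating {V : Type*} (G : SimpleGraph V) (P : Set (Sym2 V)) (t : ℕ) : Prop :=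
  (∃ (n : ℕ) (f : V → (Fin n → Bool)), IsEmbedding G (cube n) f ∧
      ∀ x y : V, s(x, y) ∈ P → hammingDist (f x) (f y) = t) ∧
  (∀ (n k : ℕ) (g : V → layerSet n k), IsEmbedding G (layer n k) g →
      ∃ x y : V, s(x, y) ∈ P ∧ hammingDist (g x).1 (g y).1 = t + 2)
/-- The graph obtained from `T` by adding, for each pair `p ∈ P`, `k+1` new paths of
length `k` between the two vertices of `p`, internally vertex-disjoint. The internal
vertices of the `j`-th path for the pair `p` are `(p, j, 0), …, (p, j, k-2)`, attached to
the two endpoints of `p` at the two ends. -/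
def spindleGraph {V : Type*} (T : SimpleGraph V) (P : Set (Sym2 V)) (k : ℕ) :
    SimpleGraph (V ⊕ (P × Fin (k + 1) × Fin (k - 1))) where
  Adj a b :=
    match a, b with
    | Sum.inl u, Sum.inl v => T.Adj u v
    | Sum.inl u, Sum.inr (p, _, i) =>
        ((i : ℕ) = 0 ∧ u = (Quot.out (p : Sym2 V)).1) ∨
        ((i : ℕ) = k - 2 ∧ u = (Quot.out (p : Sym2 V)).2)
    | Sum.inr (p, _, i), Sum.inl u =>
        ((i : ℕ) = 0 ∧ u = (Quot.out (p : Sym2 V)).1) ∨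
        ((i : ℕ) = k - 2 ∧ u = (Quot.out (p : Sym2 V)).2)
    | Sum.inr (p, j, i), Sum.inr (q, j', i') =>
        p = q ∧ j = j' ∧ ((i : ℕ) + 1 = (i' : ℕ) ∨ (i' : ℕ) + 1 = (i : ℕ))
  symm := by
    constructor
    rintro (u | ⟨p, j, i⟩) (v | ⟨q, j', i'⟩) h
    · exact T.symm.symm _ _ h
    · exact h
    · exact h
    · obtain ⟨h1, h2, h3⟩ := h
      exact ⟨h1.symm, h2.symm, h3.symm⟩
  loopless := by
    constructor
    rintro (u | ⟨p, j, i⟩) h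
    · exact T.loopless.irrefl u h
    · obtain ⟨-, -, h3⟩ := h
      omega

/-! A layer embedding of the spindle graph restricts to one of `T`, so by distance-separation some
pair `{x, y}` of `P` is sent to two vertices at Hamming distance `k`. No hypercube embedding allows
this: the `k + 1` paths of length `k` from `x` to `y` begin with `k + 1` distinct neighbours of the
image of `x`, each within `k - 1`, hence strictly closer, to the image of `y`; such a neighbour
flips one of the `k` coordinates where the two images differ, so there are at most `k` of them. -/

section Hamming

variable {ι : Type*} [Fintype ι] [DecidableEq ι]

theorem hammingDist_eq_one_iff {β : ι → Type*} [∀ i, DecidableEq (β i)] {x y : ∀ i, β i} :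
    hammingDist x y = 1 ↔ ∃ i, x i ≠ y i ∧ ∀ j ≠ i, x j = y j := by
  simp only [hammingDist, Finset.card_eq_one, Finset.ext_iff, Finset.mem_filter,
    Finset.mem_univ, true_and, Finset.mem_singleton]
  refine exists_congr fun i => ⟨fun h => ⟨(h i).2 rfl, fun j hj => not_not.1 (hj ∘ (h j).1)⟩,
    fun ⟨hi, h⟩ j => ⟨fun hj => ?_, fun hj => hj ▸ hi⟩⟩
  by_contra hji
  exact hj (h j hji)

/-- Flipping a coordinate on which `A` and `B` agree moves away from `B`. -/
theorem exists_eq_update_not_of_hammingDist_lt {A B C : ι → Bool} (hAC : hammingDist A C = 1)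
    (hCB : hammingDist C B < hammingDist A B) :
    ∃ i, A i ≠ B i ∧ C = Function.update A i (!A i) := by
  obtain ⟨i, hi, hA⟩ := hammingDist_eq_one_iff.1 hAC
  refine ⟨i, fun hiB => hCB.not_ge (Finset.card_le_card fun j => ?_), ?_⟩
  · simp only [Finset.mem_filter, Finset.mem_univ, true_and]
    intro hj
    have hji : j ≠ i := by rintro rfl; exact hj hiB
    rwa [← hA j hji]
  · funext j
    rcases eq_or_ne j i with rfl | hji
    · simpa using Bool.eq_not.2 hi.symm
    · simp [Function.update_of_ne hji, hA j hji]

theorem card_le_hammingDist_of_forall_closer {A B : ι → Bool} (s : Finset (ι → Bool))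
    (hs : ∀ C ∈ s, hammingDist A C = 1 ∧ hammingDist C B < hammingDist A B) :
    s.card ≤ hammingDist A B := by
  calc s.card
      ≤ ((Finset.univ.filter fun i => A i ≠ B i).image fun i => Function.update A i (!A i)).card := by
        refine Finset.card_le_card fun C hC => ?_
        obtain ⟨i, hi, rfl⟩ := exists_eq_update_not_of_hammingDist_lt (hs C hC).1 (hs C hC).2
        exact Finset.mem_image_of_mem _ (by simpa using hi)
    _ ≤ hammingDist A B := Finset.card_image_le

end Hamming

namespace IsEmbedding

variable {U V W : Type*} {F : SimpleGraph U} {G : SimpleGraph V} {H : SimpleGraph W}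

theorem comp {f : V → W} {g : U → V} (hf : IsEmbedding G H f) (hg : IsEmbedding F G g) :
    IsEmbedding F H (f ∘ g) :=
  ⟨hf.1.comp hg.1, fun _ _ h => hf.2 _ _ (hg.2 _ _ h)⟩

theorem subtype_val {n k : ℕ} {g : V → layerSet n k} (hg : IsEmbedding G (layer n k) g) :
    IsEmbedding G (cube n) fun v => (g v).1 :=
  ⟨Subtype.val_injective.comp hg.1, hg.2⟩

theorem hammingDist_le_length {n : ℕ} {f : V → (Fin n → Bool)} (hf : IsEmbedding G (cube n) f)
    {u v : V} (w : G.Walk u v) : hammingDist (f u) (f v) ≤ w.length := by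
  induction w with
  | nil => simp
  | @cons u v x huv w ih =>
    have hstep : hammingDist (f u) (f v) = 1 := hf.2 _ _ huv
    have htri := hammingDist_triangle (f u) (f v) (f x)
    rw [SimpleGraph.Walk.length_cons]
    omega

end IsEmbedding

namespace spindleGraph

variable {V : Type*} {T : SimpleGraph V} {P : Set (Sym2 V)} {k : ℕ}

theorem isEmbedding_inl : IsEmbedding T (spindleGraph T P k) Sum.inl :=
  ⟨Sum.inl_injective, fun _ _ h => h⟩

theorem exists_walk_inr_inl_snd (p : P) (j : Fin (k + 1)) (t : Fin (k - 1)) :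
    ∃ w : (spindleGraph T P k).Walk (Sum.inr (p, j, t)) (Sum.inl (Quot.out (p : Sym2 V)).2),
      w.length = k - 1 - t := by
  obtain ⟨t, ht⟩ := t
  induction hd : k - 2 - t generalizing t with
  | zero =>
    have hadj : (spindleGraph T P k).Adj (Sum.inr (p, j, ⟨t, ht⟩))
        (Sum.inl (Quot.out (p : Sym2 V)).2) := Or.inr ⟨by simp; omega, rfl⟩
    exact ⟨.cons hadj .nil, by simp; omega⟩
  | succ d ih =>
    have ht' : t + 1 < k - 1 := by omega
    have hadj : (spindleGraph T P k).Adj (Sum.inr (p, j, ⟨t, ht⟩))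
        (Sum.inr (p, j, ⟨t + 1, ht'⟩)) := ⟨rfl, rfl, Or.inl rfl⟩
    obtain ⟨w, hw⟩ := ih (t + 1) ht' (by omega)
    exact ⟨.cons hadj w, by simp at hw ⊢; omega⟩

theorem hammingDist_inl_lt {n : ℕ} {f : V ⊕ (P × Fin (k + 1) × Fin (k - 1)) → (Fin n → Bool)}
    (hk : 2 ≤ k) (hf : IsEmbedding (spindleGraph T P k) (cube n) f) {x y : V} (hxy : s(x, y) ∈ P) :
    hammingDist (f (Sum.inl x)) (f (Sum.inl y)) < k := by
  set p : P := ⟨s(x, y), hxy⟩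
  set a := (Quot.out (p : Sym2 V)).1
  set b := (Quot.out (p : Sym2 V)).2
  have hsym : hammingDist (f (Sum.inl a)) (f (Sum.inl b)) =
      hammingDist (f (Sum.inl x)) (f (Sum.inl y)) := by
    have hab : s(a, b) = s(x, y) := Quot.out_eq _
    clear_value a b
    rcases Sym2.eq_iff.1 hab with ⟨rfl, rfl⟩ | ⟨rfl, rfl⟩
    · rfl
    · exact hammingDist_comm _ _
  rw [← hsym]
  have hk1 : 0 < k - 1 := by omega
  let C : Fin (k + 1) → Fin n → Bool := fun j => f (Sum.inr (p, j, ⟨0, hk1⟩))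
  have hC : Function.Injective C := fun j j' h => by simpa using hf.1 h
  have hAC : ∀ j, hammingDist (f (Sum.inl a)) (C j) = 1 := fun j => hf.2 _ _ (Or.inl ⟨rfl, rfl⟩)
  have hCB : ∀ j, hammingDist (C j) (f (Sum.inl b)) ≤ k - 1 := fun j => by
    obtain ⟨w, hw⟩ := exists_walk_inr_inl_snd (T := T) p j ⟨0, hk1⟩
    exact (hf.hammingDist_le_length w).trans hw.le
  by_contra! hle
  have hcard := card_le_hammingDist_of_forall_closer (Finset.univ.image C) fun _ hc => by
    obtain ⟨j, -, rfl⟩ := Finset.mem_image.1 hc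
    exact ⟨hAC j, (hCB j).trans_lt (by omega)⟩
  rw [Finset.card_image_of_injective _ hC, Finset.card_univ, Fintype.card_fin] at hcard
  have hAB := (hammingDist_triangle _ (C 0) _).trans (add_le_add (hAC 0).le (hCB 0))
  omega

end spindleGraph

theorem spindleGraph_not_isLayered_general {V : Type}
    (k : ℕ) (hk : 2 ≤ k) (T : SimpleGraph V)
    (P : Set (Sym2 V)) (h : DistSeparating T P (k - 2)) :
    ¬ IsLayered (spindleGraph T P k) := by
  rintro ⟨n, l, g, hg⟩
  obtain ⟨x, y, hxy, hdist⟩ := h.2 n l _ (hg.comp spindleGraph.isEmbedding_inl)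
  have := spindleGraph.hammingDist_inl_lt hk hg.subtype_val hxy
  simp only [Function.comp_apply] at hdist
  omega

/-- If `T` is a tree such that `(T, P)` is `(k-2)`-distance-separating,
then the graph obtained by adding `k+1` spindle paths of length `k` between each pair of
`P` is not layered. -/
theorem spindleGraph_not_isLayered {V : Type} [Fintype V]
    (k : ℕ) (hk : 2 ≤ k) (hke : Even k) (T : SimpleGraph V) (hT : T.IsTree)
    (P : Set (Sym2 V)) (h : DistSeparating T P (k - 2)) :
    ¬ IsLayered (spindleGraph T P k) :=
  spindleGraph_not_isLayered_general k hk T P h
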